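/- arXiv:2409.16691 — 2 statements merged into one kernel-verified Lean document; each statement's English description precedes it below -/
import Mathlib

section
/- Let 0 < α < n and let g : ℝⁿ → [0,∞) be measurable. Suppose g belongs to the Morrey space Ṁ^{1, n/β}(ℝⁿ) for some α < β < n (equivalently, the heat extension satisfies t^{β/2} ‖h_t * g‖_{L^∞} ≤ C₀ for all t > 0). Then for all x ∈ ℝⁿ: I_α(g)(x) ≤ C(n,α,β) ( M_B g(x) )^{1-α/β} ‖g‖_{Ṁ^{1,n/β}}^{α/β}, where I_α(g)(x) = Γ(α/2)^{-1} ∫_0^∞ t^{α/2 - 1} (h_t * g)(x) dt is the Riesz potential, M_B is the Hardy–Littlewood maximal function, and h_t is the heat kernel. -/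
open MeasureTheory Metric Set ENNReal

noncomputable def heatK (n : ℕ) (t : ℝ) (x : EuclideanSpace ℝ (Fin n)) : ℝ :=
  (4 * Real.pi * t) ^ (-(n : ℝ) / 2) * Real.exp (-‖x‖ ^ 2 / (4 * t))

noncomputable def heatConv (n : ℕ) (t : ℝ) (g : EuclideanSpace ℝ (Fin n) → ℝ)
    (x : EuclideanSpace ℝ (Fin n)) : ℝ≥0∞ :=
  ∫⁻ y, ENNReal.ofReal (heatK n t (x - y) * g y)

noncomputable def maximalFn (n : ℕ) (g : EuclideanSpace ℝ (Fin n) → ℝ)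
    (x : EuclideanSpace ℝ (Fin n)) : ℝ≥0∞ :=
  ⨆ (z : EuclideanSpace ℝ (Fin n)) (r : ℝ) (_ : 0 < r) (_ : x ∈ ball z r),
    (volume (ball z r))⁻¹ * ∫⁻ y in ball z r, ENNReal.ofReal (|g y|)

noncomputable def morreyNorm (n : ℕ) (p q : ℝ) (f : EuclideanSpace ℝ (Fin n) → ℝ) : ℝ≥0∞ :=
  ⨆ (x : EuclideanSpace ℝ (Fin n)) (r : ℝ) (_ : 0 < r),
    (ENNReal.ofReal (r ^ (-((n : ℝ) * (1 - p / q)))) *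
      ∫⁻ y in ball x r, ENNReal.ofReal (|f y| ^ p)) ^ (1 / p)

/-- Riesz potential of order `α` written through the heat semigroup. -/
noncomputable def rieszHeat (n : ℕ) (α : ℝ) (g : EuclideanSpace ℝ (Fin n) → ℝ)
    (x : EuclideanSpace ℝ (Fin n)) : ℝ≥0∞ :=
  (ENNReal.ofReal (Real.Gamma (α / 2)))⁻¹ *
    ∫⁻ t in Ioi (0 : ℝ), ENNReal.ofReal (t ^ (α / 2 - 1)) * heatConv n t g x

/-!
Integrating the Gaussian profile by layers in the radius writes `h_t * g (x)` as a superposition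
of the ball integrals `∫_{B(x,s)} g` against a weight in `s` whose moments are explicit powers
of `t`. Bounding ball integrals by `|B(x,s)| M_B g(x)` gives `h_t * g (x) ≲ M_B g(x)`, and by the
Morrey norm `s^{n-β} ‖g‖` gives `h_t * g (x) ≲ t^{-β/2} ‖g‖`. Using the first bound for
`t < T`, the second for `t > T` in the subordination integral of `I_α`, and choosing `T` where
the two contributions balance, gives `(M_B g(x))^{1-α/β} ‖g‖^{α/β}`.
-/

namespace HeatKernel

variable {n : ℕ} {t : ℝ}

/-- Minus the radial derivative of `heatK n t`, i.e. the density in the radius of the layer-cake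
decomposition of the heat kernel. -/
noncomputable def layerWeight (n : ℕ) (t s : ℝ) : ℝ :=
  (4 * Real.pi * t) ^ (-(n : ℝ) / 2) * (s / (2 * t) * Real.exp (-s ^ 2 / (4 * t)))

lemma layerWeight_nonneg (ht : 0 < t) {s : ℝ} (hs : 0 ≤ s) : 0 ≤ layerWeight n t s := by
  unfold layerWeight
  positivity

lemma integrable_layerWeight (ht : 0 < t) : Integrable (layerWeight n t) := by
  have h_gauss : layerWeight n t = fun s => (4 * Real.pi * t) ^ (-(n : ℝ) / 2) / (2 * t) *
      (s * Real.exp (-(1 / (4 * t)) * s ^ 2)) := by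
    ext s
    unfold layerWeight
    ring_nf
  rw [h_gauss]
  exact (integrable_mul_exp_neg_mul_sq (by positivity)).const_mul _

lemma ofReal_heatK_eq_lintegral (ht : 0 < t) (z : EuclideanSpace ℝ (Fin n)) :
    ENNReal.ofReal (heatK n t z) = ∫⁻ s in Ioi ‖z‖, ENNReal.ofReal (layerWeight n t s) := by
  set c := (4 * Real.pi * t) ^ (-(n : ℝ) / 2) with hc
  have hderiv (s : ℝ) : HasDerivAt (fun s : ℝ => -(c * Real.exp (-s ^ 2 / (4 * t))))
      (layerWeight n t s) s := by
    have hexp : HasDerivAt (fun s : ℝ => -s ^ 2 / (4 * t)) (-(2 * s) / (4 * t)) s := by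
      simpa [neg_div] using (hasDerivAt_pow 2 s).neg.div_const (4 * t)
    exact (hexp.exp.const_mul c).neg.congr_deriv (by rw [layerWeight, ← hc]; field_simp; ring)
  have hlim : Filter.Tendsto (fun s : ℝ => -(c * Real.exp (-s ^ 2 / (4 * t))))
      Filter.atTop (nhds 0) := by
    have h : Filter.Tendsto (fun s : ℝ => -s ^ 2 / (4 * t)) Filter.atTop Filter.atBot := by
      simp_rw [neg_div]
      exact Filter.tendsto_neg_atTop_atBot.comp
        ((Filter.tendsto_pow_atTop two_ne_zero).atTop_div_const (by positivity))
    simpa using ((Real.tendsto_exp_atBot.comp h).const_mul c).neg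
  have hFTC := integral_Ioi_of_hasDerivAt_of_tendsto' (a := ‖z‖) (fun s _ => hderiv s)
    (integrable_layerWeight ht).integrableOn hlim
  rw [← ofReal_integral_eq_lintegral_ofReal (integrable_layerWeight ht).integrableOn, hFTC]
  · simp [heatK, c]
  · filter_upwards [ae_restrict_mem measurableSet_Ioi] with s hs
    exact layerWeight_nonneg ht ((norm_nonneg z).trans hs.le)

lemma heatConv_eq_lintegral_ball (ht : 0 < t) {g : EuclideanSpace ℝ (Fin n) → ℝ}
    (hg : Measurable g) (x : EuclideanSpace ℝ (Fin n)) :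
    heatConv n t g x = ∫⁻ s in Ioi 0,
      ENNReal.ofReal (layerWeight n t s) * ∫⁻ y in ball x s, ENNReal.ofReal (g y) := by
  set F : EuclideanSpace ℝ (Fin n) × ℝ → ℝ≥0∞ := {p | dist p.1 x < p.2}.indicator
    fun p => ENNReal.ofReal (layerWeight n t p.2) * ENNReal.ofReal (g p.1)
  have hF : Measurable F := by
    refine Measurable.indicator (by unfold layerWeight; fun_prop) ?_
    exact measurableSet_lt (by fun_prop) measurable_snd
  have h_radial (y : EuclideanSpace ℝ (Fin n)) :
      ENNReal.ofReal (heatK n t (x - y) * g y) = ∫⁻ s in Ioi 0, F (y, s) := by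
    have h_nonneg : 0 ≤ heatK n t (x - y) := by unfold heatK; positivity
    rw [ENNReal.ofReal_mul h_nonneg, ofReal_heatK_eq_lintegral ht,
      ← lintegral_mul_const' _ _ ENNReal.ofReal_ne_top, ← dist_eq_norm, dist_comm,
      ← sup_eq_left.mpr dist_nonneg, ← Ioi_inter_Ioi,
      ← Measure.restrict_restrict measurableSet_Ioi, ← lintegral_indicator measurableSet_Ioi]
    rfl
  have h_ball (s : ℝ) : ∫⁻ y, F (y, s) =
      ENNReal.ofReal (layerWeight n t s) * ∫⁻ y in ball x s, ENNReal.ofReal (g y) := by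
    rw [← lintegral_const_mul' _ _ ENNReal.ofReal_ne_top,
      ← lintegral_indicator measurableSet_ball]
    rfl
  calc heatConv n t g x = ∫⁻ y, ∫⁻ s in Ioi 0, F (y, s) := lintegral_congr h_radial
    _ = ∫⁻ s in Ioi 0, ∫⁻ y, F (y, s) := lintegral_lintegral_swap hF.aemeasurable
    _ = _ := lintegral_congr h_ball

noncomputable def momentConst (n : ℕ) (γ : ℝ) : ℝ :=
  (4 * Real.pi) ^ (-(n : ℝ) / 2) * 4 ^ ((γ + 2) / 2) * Real.Gamma ((γ + 2) / 2) / 4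

lemma momentConst_pos (n : ℕ) {γ : ℝ} (hγ : -2 < γ) : 0 < momentConst n γ := by
  have := Real.Gamma_pos_of_pos (show 0 < (γ + 2) / 2 by linarith)
  unfold momentConst
  positivity

lemma lintegral_layerWeight_mul_rpow (ht : 0 < t) {γ : ℝ} (hγ : -2 < γ) :
    ∫⁻ s in Ioi 0, ENNReal.ofReal (layerWeight n t s * s ^ γ) =
      ENNReal.ofReal (momentConst n γ * t ^ ((γ - n) / 2)) := by
  set c := (4 * Real.pi) ^ (-(n : ℝ) / 2) * t ^ (-(n : ℝ) / 2) / (2 * t)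
  set f : ℝ → ℝ := fun s => s ^ (γ + 1) * Real.exp (-(1 / (4 * t)) * s ^ (2 : ℝ))
  have h_eq : EqOn (fun s => layerWeight n t s * s ^ γ) (fun s => c * f s) (Ioi 0) := by
    intro s (hs : 0 < s)
    simp only [layerWeight, c, f, Real.mul_rpow (by positivity : (0 : ℝ) ≤ 4 * Real.pi) ht.le,
      Real.rpow_add_one hs.ne', Real.rpow_two]
    field_simp
  have hf : IntegrableOn f (Ioi 0) := by
    simpa [f, Real.rpow_two] using
      integrableOn_rpow_mul_exp_neg_mul_sq (by positivity : 0 < 1 / (4 * t))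
        (by linarith : -1 < γ + 1)
  have hgauss : ∫ s in Ioi 0, f s =
      4 ^ ((γ + 2) / 2) * t ^ ((γ + 2) / 2) * (1 / 2) * Real.Gamma ((γ + 2) / 2) := by
    rw [integral_rpow_mul_exp_neg_mul_rpow two_pos (by linarith) (by positivity),
      show γ + 1 + 1 = γ + 2 by ring, one_div (4 * t), Real.inv_rpow (by positivity),
      ← Real.rpow_neg (by positivity), neg_div, neg_neg, Real.mul_rpow (by norm_num) ht.le]
  have ht_pow : t ^ (-(n : ℝ) / 2) * t ^ ((γ + 2) / 2) = t ^ ((γ - n) / 2) * t := by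
    rw [← Real.rpow_add ht, ← Real.rpow_add_one ht.ne']
    ring_nf
  rw [setLIntegral_congr_fun measurableSet_Ioi fun s hs => congrArg ENNReal.ofReal (h_eq hs),
    ← ofReal_integral_eq_lintegral_ofReal (hf.const_mul c), integral_const_mul, hgauss]
  · congr 1
    calc c * (4 ^ ((γ + 2) / 2) * t ^ ((γ + 2) / 2) * (1 / 2) * Real.Gamma ((γ + 2) / 2))
        = momentConst n γ * (t ^ (-(n : ℝ) / 2) * t ^ ((γ + 2) / 2) / t) := by
          simp only [c, momentConst]
          ring
      _ = momentConst n γ * t ^ ((γ - n) / 2) := by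
          rw [ht_pow, mul_div_cancel_right₀ _ ht.ne']
  · filter_upwards [ae_restrict_mem measurableSet_Ioi] with s (hs : 0 < s)
    simp only [c, f]
    positivity

lemma heatConv_le_of_lintegral_ball_le (ht : 0 < t) {γ : ℝ} (hγ : -2 < γ)
    {g : EuclideanSpace ℝ (Fin n) → ℝ} (hg : Measurable g) (x : EuclideanSpace ℝ (Fin n))
    {D : ℝ≥0∞} (hball : ∀ s, 0 < s →
      ∫⁻ y in ball x s, ENNReal.ofReal (g y) ≤ ENNReal.ofReal (s ^ γ) * D) :
    heatConv n t g x ≤ ENNReal.ofReal (momentConst n γ * t ^ ((γ - n) / 2)) * D := by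
  rw [heatConv_eq_lintegral_ball ht hg x, ← lintegral_layerWeight_mul_rpow ht hγ,
    ← lintegral_mul_const _ (by unfold layerWeight; fun_prop)]
  refine setLIntegral_mono (by unfold layerWeight; fun_prop) fun s (hs : 0 < s) => ?_
  calc ENNReal.ofReal (layerWeight n t s) * ∫⁻ y in ball x s, ENNReal.ofReal (g y)
      ≤ ENNReal.ofReal (layerWeight n t s) * (ENNReal.ofReal (s ^ γ) * D) := by
        gcongr
        exact hball s hs
    _ = ENNReal.ofReal (layerWeight n t s * s ^ γ) * D := by
        rw [ENNReal.ofReal_mul (layerWeight_nonneg ht hs.le), mul_assoc]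

end HeatKernel

lemma lintegral_ball_le_maximalFn {n : ℕ} (g : EuclideanSpace ℝ (Fin n) → ℝ)
    (x : EuclideanSpace ℝ (Fin n)) {s : ℝ} (hs : 0 < s) :
    ∫⁻ y in ball x s, ENNReal.ofReal (g y) ≤
      ENNReal.ofReal (s ^ (n : ℝ)) *
        (volume (ball (0 : EuclideanSpace ℝ (Fin n)) 1) * maximalFn n g x) := by
  have h_avg :
      (volume (ball x s))⁻¹ * ∫⁻ y in ball x s, ENNReal.ofReal |g y| ≤ maximalFn n g x :=
    le_iSup₂_of_le x s <| le_iSup₂_of_le hs (mem_ball_self hs) le_rfl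
  calc ∫⁻ y in ball x s, ENNReal.ofReal (g y)
      ≤ ∫⁻ y in ball x s, ENNReal.ofReal |g y| := by gcongr; exact le_abs_self _
    _ = volume (ball x s) *
          ((volume (ball x s))⁻¹ * ∫⁻ y in ball x s, ENNReal.ofReal |g y|) := by
        rw [← mul_assoc, ENNReal.mul_inv_cancel (measure_ball_pos volume x hs).ne'
          measure_ball_lt_top.ne, one_mul]
    _ ≤ volume (ball x s) * maximalFn n g x := by gcongr
    _ = _ := by
        rw [Measure.addHaar_ball_of_pos volume x hs, finrank_euclideanSpace_fin, mul_assoc,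
          Real.rpow_natCast]

lemma lintegral_ball_le_morreyNorm {n : ℕ} (hn : n ≠ 0) (β : ℝ)
    (g : EuclideanSpace ℝ (Fin n) → ℝ)
    (x : EuclideanSpace ℝ (Fin n)) {s : ℝ} (hs : 0 < s) :
    ∫⁻ y in ball x s, ENNReal.ofReal (g y) ≤
      ENNReal.ofReal (s ^ ((n : ℝ) - β)) * morreyNorm n 1 ((n : ℝ) / β) g := by
  have h_exp : -((n : ℝ) * (1 - β / n)) = β - n := by
    field_simp
    ring
  have h_scaled : ENNReal.ofReal (s ^ (β - n)) * ∫⁻ y in ball x s, ENNReal.ofReal |g y| ≤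
      morreyNorm n 1 ((n : ℝ) / β) g := by
    refine le_iSup₂_of_le x s <| le_iSup_of_le hs ?_
    simp [h_exp]
  calc ∫⁻ y in ball x s, ENNReal.ofReal (g y)
      ≤ ∫⁻ y in ball x s, ENNReal.ofReal |g y| := by gcongr; exact le_abs_self _
    _ = ENNReal.ofReal (s ^ ((n : ℝ) - β)) *
        (ENNReal.ofReal (s ^ (β - n)) * ∫⁻ y in ball x s, ENNReal.ofReal |g y|) := by
        rw [← mul_assoc, ← ENNReal.ofReal_mul (by positivity), ← Real.rpow_add hs,
          sub_add_sub_cancel', sub_self, Real.rpow_zero, ENNReal.ofReal_one, one_mul]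
    _ ≤ _ := by gcongr

lemma heatConv_le_maximalFn {n : ℕ} {t : ℝ} (ht : 0 < t)
    {g : EuclideanSpace ℝ (Fin n) → ℝ} (hg : Measurable g) (x : EuclideanSpace ℝ (Fin n)) :
    heatConv n t g x ≤ ENNReal.ofReal (HeatKernel.momentConst n n *
      (volume (ball (0 : EuclideanSpace ℝ (Fin n)) 1)).toReal) * maximalFn n g x := by
  have hγ : -2 < (n : ℝ) := by linarith [n.cast_nonneg (α := ℝ)]
  have := HeatKernel.heatConv_le_of_lintegral_ball_le ht hγ hg x
    fun s hs => lintegral_ball_le_maximalFn g x hs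
  rwa [sub_self, zero_div, Real.rpow_zero, mul_one,
    ← ENNReal.ofReal_toReal measure_ball_lt_top.ne, ← mul_assoc,
    ← ENNReal.ofReal_mul (HeatKernel.momentConst_pos n hγ).le] at this

lemma heatConv_le_morreyNorm {n : ℕ} (hn : n ≠ 0) {β : ℝ} (hβ : β < n + 2) {t : ℝ}
    (ht : 0 < t) {g : EuclideanSpace ℝ (Fin n) → ℝ} (hg : Measurable g)
    (x : EuclideanSpace ℝ (Fin n)) :
    heatConv n t g x ≤ ENNReal.ofReal (t ^ (-(β / 2))) *
      (ENNReal.ofReal (HeatKernel.momentConst n (n - β)) * morreyNorm n 1 ((n : ℝ) / β) g) := by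
  have hγ : -2 < (n : ℝ) - β := by linarith
  have := HeatKernel.heatConv_le_of_lintegral_ball_le ht hγ hg x
    fun s hs => lintegral_ball_le_morreyNorm hn β g x hs
  rwa [show ((n : ℝ) - β - n) / 2 = -(β / 2) by ring, mul_comm (HeatKernel.momentConst _ _),
    ENNReal.ofReal_mul (by positivity), mul_assoc] at this

section TimeSplitting

variable {a b T : ℝ}

lemma lintegral_Ioc_rpow_sub_one (ha : 0 < a) (hT : 0 < T) :
    ∫⁻ t in Ioc 0 T, ENNReal.ofReal (t ^ (a - 1)) = ENNReal.ofReal (T ^ a / a) := by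
  have h_int : IntegrableOn (fun t : ℝ => t ^ (a - 1)) (Ioc 0 T) :=
    (intervalIntegral.intervalIntegrable_rpow' (by linarith : -1 < a - 1)).1
  rw [← ofReal_integral_eq_lintegral_ofReal h_int, ← intervalIntegral.integral_of_le hT.le,
    integral_rpow (Or.inl (by linarith)), sub_add_cancel, Real.zero_rpow ha.ne', sub_zero]
  filter_upwards [ae_restrict_mem measurableSet_Ioc] with t ht
  exact Real.rpow_nonneg ht.1.le _

lemma lintegral_Ioi_rpow_sub_one (ha : a < 0) (hT : 0 < T) :
    ∫⁻ t in Ioi T, ENNReal.ofReal (t ^ (a - 1)) = ENNReal.ofReal (T ^ a / -a) := by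
  have h_int : IntegrableOn (fun t : ℝ => t ^ (a - 1)) (Ioi T) :=
    integrableOn_Ioi_rpow_of_lt (by linarith) hT
  rw [← ofReal_integral_eq_lintegral_ofReal h_int, integral_Ioi_rpow_of_lt (by linarith) hT,
    sub_add_cancel, neg_div, div_neg]
  filter_upwards [ae_restrict_mem measurableSet_Ioi] with t (ht : T < t)
  exact Real.rpow_nonneg (hT.trans ht).le _

variable {h : ℝ → ℝ≥0∞} {A B : ℝ≥0∞}

lemma lintegral_Ioi_rpow_mul_le_split (ha : 0 < a) (hab : a < b) (hT : 0 < T)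
    (hA : ∀ t, 0 < t → h t ≤ A)
    (hB : ∀ t, 0 < t → h t ≤ ENNReal.ofReal (t ^ (-b)) * B) :
    ∫⁻ t in Ioi 0, ENNReal.ofReal (t ^ (a - 1)) * h t ≤
      ENNReal.ofReal (T ^ a / a) * A + ENNReal.ofReal (T ^ (a - b) / (b - a)) * B := by
  rw [← Ioc_union_Ioi_eq_Ioi hT.le, lintegral_union measurableSet_Ioi (Ioc_disjoint_Ioi le_rfl)]
  gcongr
  · calc ∫⁻ t in Ioc 0 T, ENNReal.ofReal (t ^ (a - 1)) * h t
        ≤ ∫⁻ t in Ioc 0 T, ENNReal.ofReal (t ^ (a - 1)) * A :=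
          setLIntegral_mono (by fun_prop) fun t ht => by gcongr; exact hA t ht.1
      _ = ENNReal.ofReal (T ^ a / a) * A := by
          rw [lintegral_mul_const _ (by fun_prop), lintegral_Ioc_rpow_sub_one ha hT]
  · calc ∫⁻ t in Ioi T, ENNReal.ofReal (t ^ (a - 1)) * h t
        ≤ ∫⁻ t in Ioi T, ENNReal.ofReal (t ^ (a - b - 1)) * B := by
          refine setLIntegral_mono (by fun_prop) fun t (ht : T < t) => ?_
          have ht0 : 0 < t := hT.trans ht
          calc ENNReal.ofReal (t ^ (a - 1)) * h t
              ≤ ENNReal.ofReal (t ^ (a - 1)) * (ENNReal.ofReal (t ^ (-b)) * B) := by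
                gcongr; exact hB t ht0
            _ = ENNReal.ofReal (t ^ (a - b - 1)) * B := by
                rw [← mul_assoc, ← ENNReal.ofReal_mul (by positivity), ← Real.rpow_add ht0]
                ring_nf
      _ = ENNReal.ofReal (T ^ (a - b) / (b - a)) * B := by
          rw [lintegral_mul_const _ (by fun_prop), lintegral_Ioi_rpow_sub_one (by linarith) hT,
            neg_sub]

lemma lintegral_Ioi_rpow_mul_le_interpolate (ha : 0 < a) (hab : a < b)
    (hA : ∀ t, 0 < t → h t ≤ A)
    (hB : ∀ t, 0 < t → h t ≤ ENNReal.ofReal (t ^ (-b)) * B) :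
    ∫⁻ t in Ioi 0, ENNReal.ofReal (t ^ (a - 1)) * h t ≤
      ENNReal.ofReal (1 / a + 1 / (b - a)) * A ^ (1 - a / b) * B ^ (a / b) := by
  have hb : 0 < b := ha.trans hab
  have hθ : 0 < a / b := div_pos ha hb
  have hθ' : 0 < 1 - a / b := by rw [sub_pos, div_lt_one hb]; exact hab
  by_cases h_zero : A = 0 ∨ B = 0
  · have h_vanish : ∀ t ∈ Ioi (0 : ℝ), ENNReal.ofReal (t ^ (a - 1)) * h t = 0 := by
      intro t (ht : 0 < t)
      rcases h_zero with rfl | rfl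
      · simp [le_zero_iff.mp (hA t ht)]
      · simp [show h t = 0 by simpa using hB t ht]
    simp [setLIntegral_congr_fun measurableSet_Ioi h_vanish]
  by_cases h_top : A = ⊤ ∨ B = ⊤
  · refine le_top.trans_eq (Eq.symm ?_)
    have hc : ENNReal.ofReal (1 / a + 1 / (b - a)) ≠ 0 := by
      have : 0 < b - a := sub_pos.mpr hab
      exact (ENNReal.ofReal_pos.mpr (by positivity)).ne'
    rw [not_or] at h_zero
    rcases h_top with rfl | rfl
    · rw [ENNReal.top_rpow_of_pos hθ', ENNReal.mul_top hc,
        ENNReal.top_mul (by simp [ENNReal.rpow_eq_zero_iff, h_zero.2, hθ.not_gt])]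
    · rw [ENNReal.top_rpow_of_pos hθ,
        ENNReal.mul_top
          (mul_ne_zero hc (by simp [ENNReal.rpow_eq_zero_iff, h_zero.1, hθ'.not_gt]))]
  rw [not_or] at h_zero h_top
  obtain ⟨x, hx, rfl⟩ : ∃ x, 0 < x ∧ A = ENNReal.ofReal x :=
    ⟨A.toReal, ENNReal.toReal_pos h_zero.1 h_top.1, (ENNReal.ofReal_toReal h_top.1).symm⟩
  obtain ⟨y, hy, rfl⟩ : ∃ y, 0 < y ∧ B = ENNReal.ofReal y :=
    ⟨B.toReal, ENNReal.toReal_pos h_zero.2 h_top.2, (ENNReal.ofReal_toReal h_top.2).symm⟩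
  set θ := a / b
  set u := y / x
  have hu : 0 < u := div_pos hy hx
  -- the splitting time balancing the two bounds: `T ^ a * x = T ^ (a - b) * y`
  set T := u ^ (1 / b)
  have hTa : T ^ a = u ^ θ := by
    rw [← Real.rpow_mul hu.le, one_div_mul_eq_div]
  have hTab : T ^ (a - b) = u ^ θ / u := by
    rw [← Real.rpow_mul hu.le, ← Real.rpow_sub_one hu.ne']
    congr 1
    simp only [θ]
    field_simp
  have h_balance : x * u ^ θ = x ^ (1 - θ) * y ^ θ := by
    rw [Real.div_rpow hy.le hx.le, Real.rpow_sub hx, Real.rpow_one]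
    ring
  have hba : 0 < b - a := sub_pos.mpr hab
  calc ∫⁻ t in Ioi 0, ENNReal.ofReal (t ^ (a - 1)) * h t
      ≤ ENNReal.ofReal (T ^ a / a) * ENNReal.ofReal x +
          ENNReal.ofReal (T ^ (a - b) / (b - a)) * ENNReal.ofReal y :=
        lintegral_Ioi_rpow_mul_le_split ha hab (by positivity) hA hB
    _ = ENNReal.ofReal ((1 / a + 1 / (b - a)) * (x * u ^ θ)) := by
        rw [← ENNReal.ofReal_mul (by positivity), ← ENNReal.ofReal_mul (by positivity),
          ← ENNReal.ofReal_add (by positivity) (by positivity), hTa, hTab]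
        congr 1
        simp only [u]
        field_simp
    _ = _ := by
        rw [h_balance, ENNReal.ofReal_rpow_of_nonneg hx.le hθ'.le,
          ENNReal.ofReal_rpow_of_nonneg hy.le hθ.le, ← ENNReal.ofReal_mul (by positivity),
          ← ENNReal.ofReal_mul (by positivity), mul_assoc]

end TimeSplitting

theorem riesz_le_maximal_morrey_general (n : ℕ) (α β : ℝ) (hα : 0 < α) (hαβ : α < β)
    (hβn : β < n) :
    ∃ C : ℝ, 0 < C ∧ ∀ (g : EuclideanSpace ℝ (Fin n) → ℝ), Measurable g → (∀ y, 0 ≤ g y) →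
      morreyNorm n 1 ((n : ℝ) / β) g < ∞ → ∀ x : EuclideanSpace ℝ (Fin n),
      rieszHeat n α g x ≤ ENNReal.ofReal C * (maximalFn n g x) ^ (1 - α / β) *
        (morreyNorm n 1 ((n : ℝ) / β) g) ^ (α / β) := by
  have hβ : 0 < β := hα.trans hαβ
  have hn : n ≠ 0 := by rintro rfl; norm_num at hβn; linarith
  set KA := HeatKernel.momentConst n n * (volume (ball (0 : EuclideanSpace ℝ (Fin n)) 1)).toReal
  set KB := HeatKernel.momentConst n (n - β)
  set c := 1 / (α / 2) + 1 / (β / 2 - α / 2)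
  have hKA : 0 < KA := mul_pos (HeatKernel.momentConst_pos n (by linarith))
    (ENNReal.toReal_pos (measure_ball_pos _ _ one_pos).ne' measure_ball_lt_top.ne)
  have hKB : 0 < KB := HeatKernel.momentConst_pos n (by linarith)
  have hc : 0 < c := by
    have : 0 < β / 2 - α / 2 := by linarith
    positivity
  refine ⟨(Real.Gamma (α / 2))⁻¹ * c * KA ^ (1 - α / β) * KB ^ (α / β), by positivity,
    fun g hg _ _ x => ?_⟩
  have hθ : 0 < α / β := div_pos hα hβ
  have hθ' : 0 < 1 - α / β := by rw [sub_pos, div_lt_one hβ]; exact hαβ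
  calc rieszHeat n α g x
      ≤ (ENNReal.ofReal (Real.Gamma (α / 2)))⁻¹ * (ENNReal.ofReal c *
          (ENNReal.ofReal KA * maximalFn n g x) ^ (1 - α / β) *
          (ENNReal.ofReal KB * morreyNorm n 1 ((n : ℝ) / β) g) ^ (α / β)) := by
        unfold rieszHeat
        gcongr
        rw [show α / β = α / 2 / (β / 2) by field_simp]
        exact lintegral_Ioi_rpow_mul_le_interpolate (by positivity) (by linarith)
          (fun t ht => heatConv_le_maximalFn ht hg x)
          (fun t ht => heatConv_le_morreyNorm hn (by linarith) ht hg x)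
    _ = _ := by
        rw [ENNReal.mul_rpow_of_nonneg _ _ hθ'.le, ENNReal.mul_rpow_of_nonneg _ _ hθ.le,
          ENNReal.ofReal_rpow_of_nonneg hKA.le hθ'.le, ENNReal.ofReal_rpow_of_nonneg hKB.le hθ.le,
          ← ENNReal.ofReal_inv_of_pos (by positivity), ENNReal.ofReal_mul (by positivity),
          ENNReal.ofReal_mul (by positivity), ENNReal.ofReal_mul (by positivity)]
        ring

/-- Hedberg-type estimate: for `0 < α < β < n` and `g ≥ 0` in the Morrey space
`Ṁ^{1, n/β}`, one has `I_α g(x) ≤ C(n,α,β) (M_B g(x))^{1-α/β} ‖g‖_{Ṁ^{1,n/β}}^{α/β}`. -/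
theorem riesz_le_maximal_morrey (n : ℕ) (hn : 1 ≤ n) (α β : ℝ) (hα : 0 < α) (hαβ : α < β)
    (hβn : β < n) :
    ∃ C : ℝ, 0 < C ∧ ∀ (g : EuclideanSpace ℝ (Fin n) → ℝ), Measurable g → (∀ y, 0 ≤ g y) →
      morreyNorm n 1 ((n : ℝ) / β) g < ∞ → ∀ x : EuclideanSpace ℝ (Fin n),
      rieszHeat n α g x ≤ ENNReal.ofReal C * (maximalFn n g x) ^ (1 - α / β) *
        (morreyNorm n 1 ((n : ℝ) / β) g) ^ (α / β) :=
  riesz_le_maximal_morrey_general n α β hα hαβ hβn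
end

section
/- Let n ≥ 2, Ω ∈ L^ρ(𝕊^{n-1}) with 1 < ρ < n and ∫_{𝕊^{n-1}} Ω dσ = 0, and f ∈ C_c^∞(ℝⁿ). For t > 0 define the truncated operator T^t_Ω f(x) = ∫_{|y|>t} Ω(y/|y|)|y|^{-n} f(x−y) dy. Then, with ρ' the conjugate exponent of ρ, for every x and every t > 0: |T^t_Ω f(x)| ≤ C ‖Ω‖_{L^ρ(𝕊^{n-1})} Σ_{k∈ℤ} ( |B(x,2^k)|^{-1} ∫_{B(x,2^k)} |f(y) − f_{B_k}|^{ρ'} dy )^{1/ρ'}, where f_{B_k} is the average of f over B(x,2^k), and consequently the maximal truncation T*_Ω f(x) = sup_{t>0} |T^t_Ω f(x)| satisfies the same bound. -/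
open MeasureTheory Metric Set ENNReal Filter

open Measure

local notation "E⁅" n "⁆" => EuclideanSpace ℝ (Fin n)

lemma nontrivial_euclidean (n : ℕ) (hn : 2 ≤ n) : Nontrivial (EuclideanSpace ℝ (Fin n)) := by
  have : 0 < Module.finrank ℝ (EuclideanSpace ℝ (Fin n)) := by
    rw [finrank_euclideanSpace_fin]; omega
  exact Module.nontrivial_of_finrank_pos this

lemma polar_lintegral (n : ℕ) (hn : 2 ≤ n) (G : EuclideanSpace ℝ (Fin n) → ℝ≥0∞)
    (hG : Measurable G) (hGh : ∀ c : ℝ, 0 < c → ∀ y, G (c • y) = G y)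
    (φ : ℝ → ℝ≥0∞) (hφ : Measurable φ) :
    ∫⁻ y, G y * φ ‖y‖ ∂(volume : Measure (EuclideanSpace ℝ (Fin n))) =
      (∫⁻ z : sphere (0 : EuclideanSpace ℝ (Fin n)) 1, G (z : EuclideanSpace ℝ (Fin n))
          ∂((volume : Measure (EuclideanSpace ℝ (Fin n))).toSphere)) *
        ∫⁻ r in Ioi (0:ℝ), ENNReal.ofReal (r ^ (n - 1)) * φ r := by
  haveI : Nontrivial (E⁅n⁆) := nontrivial_euclidean n hn
  have hdim : Module.finrank ℝ (E⁅n⁆) = n := finrank_euclideanSpace_fin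
  set μ : Measure (E⁅n⁆) := volume with hμ
  calc ∫⁻ y, G y * φ ‖y‖ ∂μ
      = ∫⁻ y in ({(0:E⁅n⁆)}ᶜ : Set (E⁅n⁆)), G y * φ ‖y‖ ∂μ := by
        rw [restrict_compl_singleton]
    _ = ∫⁻ y : ({(0:E⁅n⁆)}ᶜ : Set (E⁅n⁆)), G (y : E⁅n⁆) * φ ‖(y : E⁅n⁆)‖
          ∂(μ.comap Subtype.val) := by
        rw [lintegral_subtype_comap (measurableSet_singleton _).compl
          (fun y : E⁅n⁆ => G y * φ ‖y‖)]
    _ = ∫⁻ p : sphere (0:E⁅n⁆) 1 × Ioi (0:ℝ), G (p.1 : E⁅n⁆) * φ (p.2 : ℝ)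
          ∂(μ.toSphere.prod (volumeIoiPow (Module.finrank ℝ (E⁅n⁆) - 1))) := by
        rw [← μ.measurePreserving_homeomorphUnitSphereProd.lintegral_comp_emb
          (Homeomorph.measurableEmbedding _)
          (fun p : sphere (0:E⁅n⁆) 1 × Ioi (0:ℝ) => G (p.1 : E⁅n⁆) * φ (p.2 : ℝ))]
        refine lintegral_congr fun x => ?_
        have hx : (x : E⁅n⁆) ≠ 0 := x.2
        have h1 : ((homeomorphUnitSphereProd (E⁅n⁆) x).1 : E⁅n⁆) = ‖(x:E⁅n⁆)‖⁻¹ • (x:E⁅n⁆) := by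
          simp [homeomorphUnitSphereProd]
        have h2 : ((homeomorphUnitSphereProd (E⁅n⁆) x).2 : ℝ) = ‖(x:E⁅n⁆)‖ := by
          simp [homeomorphUnitSphereProd]
        rw [h1, h2, hGh _ (inv_pos.2 (norm_pos_iff.2 hx)) _]
    _ = (∫⁻ z : sphere (0:E⁅n⁆) 1, G (z : E⁅n⁆) ∂μ.toSphere) *
          ∫⁻ r : Ioi (0:ℝ), φ r ∂(volumeIoiPow (Module.finrank ℝ (E⁅n⁆) - 1)) := by
        exact lintegral_prod_mul (hG.comp measurable_subtype_coe).aemeasurable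
          (hφ.comp measurable_subtype_coe).aemeasurable
    _ = (∫⁻ z : sphere (0:E⁅n⁆) 1, G (z : E⁅n⁆) ∂μ.toSphere) *
          ∫⁻ r in Ioi (0:ℝ), ENNReal.ofReal (r ^ (n - 1)) * φ r := by
        congr 1
        rw [Measure.volumeIoiPow, lintegral_withDensity_eq_lintegral_mul _
          (by exact (measurable_subtype_coe.pow_const _).ennreal_ofReal)
          (g := fun r : Ioi (0:ℝ) => φ r) (hφ.comp measurable_subtype_coe), hdim]
        exact lintegral_subtype_comap measurableSet_Ioi
          (fun r : ℝ => ENNReal.ofReal (r ^ (n-1)) * φ r)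

lemma polar_integral_zero (n : ℕ) (hn : 2 ≤ n) (Ω : EuclideanSpace ℝ (Fin n) → ℝ)
    (hΩm : Measurable Ω)
    (hΩh : ∀ c : ℝ, 0 < c → ∀ y, Ω (c • y) = Ω y)
    (hΩ0 : (∫ z : sphere (0 : EuclideanSpace ℝ (Fin n)) 1, Ω (z : EuclideanSpace ℝ (Fin n))
        ∂((volume : Measure (EuclideanSpace ℝ (Fin n))).toSphere)) = 0)
    (ψ : ℝ → ℝ) (hψ : Measurable ψ) :
    ∫ y, Ω y * ψ ‖y‖ ∂(volume : Measure (EuclideanSpace ℝ (Fin n))) = 0 := by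
  haveI : Nontrivial (E⁅n⁆) := nontrivial_euclidean n hn
  set μ : Measure (E⁅n⁆) := volume with hμ
  calc ∫ y, Ω y * ψ ‖y‖ ∂μ
      = ∫ y in ({(0:E⁅n⁆)}ᶜ : Set (E⁅n⁆)), Ω y * ψ ‖y‖ ∂μ := by
        rw [restrict_compl_singleton]
    _ = ∫ y : ({(0:E⁅n⁆)}ᶜ : Set (E⁅n⁆)), Ω (y : E⁅n⁆) * ψ ‖(y : E⁅n⁆)‖
          ∂(μ.comap Subtype.val) := by
        rw [integral_subtype_comap (measurableSet_singleton _).compl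
          (fun y : E⁅n⁆ => Ω y * ψ ‖y‖)]
    _ = ∫ p : sphere (0:E⁅n⁆) 1 × Ioi (0:ℝ), Ω (p.1 : E⁅n⁆) * ψ (p.2 : ℝ)
          ∂(μ.toSphere.prod (volumeIoiPow (Module.finrank ℝ (E⁅n⁆) - 1))) := by
        rw [← μ.measurePreserving_homeomorphUnitSphereProd.integral_comp
          (Homeomorph.measurableEmbedding _)
          (fun p : sphere (0:E⁅n⁆) 1 × Ioi (0:ℝ) => Ω (p.1 : E⁅n⁆) * ψ (p.2 : ℝ))]
        refine integral_congr_ae (Filter.Eventually.of_forall fun x => ?_)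
        have hx : (x : E⁅n⁆) ≠ 0 := x.2
        have h1 : ((homeomorphUnitSphereProd (E⁅n⁆) x).1 : E⁅n⁆) = ‖(x:E⁅n⁆)‖⁻¹ • (x:E⁅n⁆) := by
          simp [homeomorphUnitSphereProd]
        have h2 : ((homeomorphUnitSphereProd (E⁅n⁆) x).2 : ℝ) = ‖(x:E⁅n⁆)‖ := by
          simp [homeomorphUnitSphereProd]
        show Ω (x : E⁅n⁆) * ψ ‖(x : E⁅n⁆)‖ =
          Ω (((homeomorphUnitSphereProd (E⁅n⁆)) x).1 : E⁅n⁆) *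
            ψ (((homeomorphUnitSphereProd (E⁅n⁆)) x).2 : ℝ)
        rw [h1, h2, hΩh _ (inv_pos.2 (norm_pos_iff.2 hx)) _]
    _ = (∫ z : sphere (0:E⁅n⁆) 1, Ω (z : E⁅n⁆) ∂μ.toSphere) *
          ∫ r : Ioi (0:ℝ), ψ r ∂(volumeIoiPow (Module.finrank ℝ (E⁅n⁆) - 1)) :=
        integral_prod_mul (fun z : sphere (0:E⁅n⁆) 1 => Ω (z : E⁅n⁆)) (fun r : Ioi (0:ℝ) => ψ (r : ℝ))
    _ = 0 := by rw [hΩ0, zero_mul]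

lemma polar_integrable (n : ℕ) (hn : 2 ≤ n) (Ω : EuclideanSpace ℝ (Fin n) → ℝ)
    (hΩm : Measurable Ω)
    (hΩh : ∀ c : ℝ, 0 < c → ∀ y, Ω (c • y) = Ω y)
    (hΩint : Integrable
      (fun z : sphere (0 : EuclideanSpace ℝ (Fin n)) 1 => Ω (z : EuclideanSpace ℝ (Fin n)))
      ((volume : Measure (EuclideanSpace ℝ (Fin n))).toSphere))
    (ψ : ℝ → ℝ) (hψ : Measurable ψ) (a b M : ℝ) (ha : 0 < a)
    (hsupp : ∀ r, ψ r ≠ 0 → r ∈ Ioc a b) (hbd : ∀ r, |ψ r| ≤ M) :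
    Integrable (fun y => Ω y * ψ ‖y‖) (volume : Measure (EuclideanSpace ℝ (Fin n))) := by
  haveI : Nontrivial (E⁅n⁆) := nontrivial_euclidean n hn
  constructor
  · exact (hΩm.mul (hψ.comp measurable_norm)).aestronglyMeasurable
  · rw [HasFiniteIntegral]
    have heq : ∀ y : E⁅n⁆, ‖Ω y * ψ ‖y‖‖ₑ =
        (fun y => ENNReal.ofReal |Ω y|) y * (fun r => ENNReal.ofReal |ψ r|) ‖y‖ := by
      intro y
      rw [← ofReal_norm, norm_mul, Real.norm_eq_abs, Real.norm_eq_abs,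
        ENNReal.ofReal_mul (abs_nonneg _)]
    rw [lintegral_congr heq, polar_lintegral n hn _ (hΩm.abs.ennreal_ofReal)
      (fun c hc y => by rw [hΩh c hc y]) _ (hψ.abs.ennreal_ofReal)]
    apply ENNReal.mul_lt_top
    · have := hΩint.2
      rw [HasFiniteIntegral] at this
      convert this using 1
      refine lintegral_congr fun z => ?_
      rw [← ofReal_norm, Real.norm_eq_abs]
    · have hle : (fun r : ℝ => ENNReal.ofReal (r ^ (n - 1)) * ENNReal.ofReal |ψ r|) ≤
          (Ioc a b).indicator (fun _ => ENNReal.ofReal (b ^ (n - 1)) * ENNReal.ofReal M) := by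
        intro r
        by_cases hr : r ∈ Ioc a b
        · rw [indicator_of_mem hr]
          exact mul_le_mul' (ENNReal.ofReal_le_ofReal
            (pow_le_pow_left₀ (le_of_lt (lt_trans ha hr.1)) hr.2 _))
            (ENNReal.ofReal_le_ofReal (hbd r))
        · rw [indicator_of_notMem hr]
          have : ψ r = 0 := by by_contra h; exact hr (hsupp r h)
          simp [this]
      calc ∫⁻ r in Ioi (0:ℝ), ENNReal.ofReal (r ^ (n - 1)) * ENNReal.ofReal |ψ r|
          ≤ ∫⁻ r in Ioi (0:ℝ), (Ioc a b).indicator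
              (fun _ => ENNReal.ofReal (b ^ (n - 1)) * ENNReal.ofReal M) r :=
            lintegral_mono hle
        _ ≤ ∫⁻ r, (Ioc a b).indicator
              (fun _ => ENNReal.ofReal (b ^ (n - 1)) * ENNReal.ofReal M) r :=
            setLIntegral_le_lintegral _ _
        _ = (ENNReal.ofReal (b ^ (n - 1)) * ENNReal.ofReal M) * volume (Ioc a b) := by
            rw [lintegral_indicator_const measurableSet_Ioc]
        _ < ⊤ := by
            rw [Real.volume_Ioc]
            exact ENNReal.mul_lt_top (ENNReal.mul_lt_top ENNReal.ofReal_lt_top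
              ENNReal.ofReal_lt_top) ENNReal.ofReal_lt_top

lemma two_ennrpow (e : ℝ) : ENNReal.ofReal ((2:ℝ) ^ e) = (2:ℝ≥0∞) ^ e := by
  rw [← ENNReal.ofReal_rpow_of_pos two_pos, ENNReal.ofReal_ofNat]

lemma zpow_pow_eq (k : ℤ) (m : ℕ) : ((2:ℝ)^k)^m = (2:ℝ)^((k*m : ℤ) : ℝ) := by
  rw [Real.rpow_intCast, ← zpow_natCast ((2:ℝ)^k) m, ← zpow_mul]

lemma zpow_eq_rpow (k : ℤ) : (2:ℝ)^k = (2:ℝ)^((k : ℤ) : ℝ) := by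
  rw [Real.rpow_intCast]

lemma ofReal_two_zpow_pow (m : ℤ) (j : ℕ) :
    ENNReal.ofReal (((2:ℝ)^m)^j) = (2:ℝ≥0∞) ^ ((m : ℝ) * j) := by
  rw [zpow_pow_eq, two_ennrpow]
  congr 1
  push_cast
  ring

lemma ofReal_two_zpow (m : ℤ) : ENNReal.ofReal ((2:ℝ)^m) = (2:ℝ≥0∞) ^ ((m:ℤ) : ℝ) := by
  rw [zpow_eq_rpow, two_ennrpow]


set_option maxHeartbeats 1000000

/-- for `Ω ∈ L^ρ(𝕊^{n-1})` (`1 < ρ < n`) with mean zero and `f ∈ C_c^∞(ℝⁿ)`,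
the truncated operators `T^t_Ω f(x) = ∫_{|y|>t} Ω(y/|y|)|y|^{-n} f(x-y) dy` satisfy, with
`ρ'` the conjugate exponent of `ρ`,
`|T^t_Ω f(x)| ≤ C ‖Ω‖_{L^ρ(𝕊^{n-1})} Σ_{k∈ℤ} ( |B(x,2^k)|⁻¹ ∫_{B(x,2^k)} |f - f_{B_k}|^{ρ'} )^{1/ρ'}`,
and consequently the maximal truncation `T*_Ω f(x)` satisfies the same bound. -/
theorem truncated_oscillation_bound (n : ℕ) (hn : 2 ≤ n) (ρ ρ' : ℝ) (hρ : 1 < ρ) (hρn : ρ < n)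
    (hρ' : 1 / ρ + 1 / ρ' = 1) :
    ∃ C : ℝ, 0 < C ∧
      ∀ (Ω : EuclideanSpace ℝ (Fin n) → ℝ), Measurable Ω →
        (∀ c : ℝ, 0 < c → ∀ y, Ω (c • y) = Ω y) →
        Integrable (fun z : sphere (0 : EuclideanSpace ℝ (Fin n)) 1 => Ω (z : EuclideanSpace ℝ (Fin n)))
          ((volume : Measure (EuclideanSpace ℝ (Fin n))).toSphere) →
        (∫ z : sphere (0 : EuclideanSpace ℝ (Fin n)) 1, Ω (z : EuclideanSpace ℝ (Fin n))
            ∂((volume : Measure (EuclideanSpace ℝ (Fin n))).toSphere)) = 0 →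
      ∀ (f : EuclideanSpace ℝ (Fin n) → ℝ), ContDiff ℝ (⊤ : ℕ∞) f → HasCompactSupport f →
      ∀ (x : EuclideanSpace ℝ (Fin n)),
      (∀ t : ℝ, 0 < t →
        ENNReal.ofReal
            |∫ y in {y : EuclideanSpace ℝ (Fin n) | t < ‖y‖}, (Ω y / ‖y‖ ^ n) * f (x - y)| ≤
          ENNReal.ofReal C *
            ((∫⁻ z : sphere (0 : EuclideanSpace ℝ (Fin n)) 1,
                ENNReal.ofReal (|Ω (z : EuclideanSpace ℝ (Fin n))| ^ ρ)
                ∂((volume : Measure (EuclideanSpace ℝ (Fin n))).toSphere)) ^ (1 / ρ)) *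
            ∑' k : ℤ,
              ((volume (ball x ((2 : ℝ) ^ k)))⁻¹ *
                ∫⁻ y in ball x ((2 : ℝ) ^ k),
                  ENNReal.ofReal
                    (|f y - ⨍ z in ball x ((2 : ℝ) ^ k), f z| ^ ρ')) ^ (1 / ρ')) ∧
      (⨆ (t : ℝ) (_ : 0 < t),
          ENNReal.ofReal
            |∫ y in {y : EuclideanSpace ℝ (Fin n) | t < ‖y‖}, (Ω y / ‖y‖ ^ n) * f (x - y)|) ≤
          ENNReal.ofReal C *
            ((∫⁻ z : sphere (0 : EuclideanSpace ℝ (Fin n)) 1,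
                ENNReal.ofReal (|Ω (z : EuclideanSpace ℝ (Fin n))| ^ ρ)
                ∂((volume : Measure (EuclideanSpace ℝ (Fin n))).toSphere)) ^ (1 / ρ)) *
            ∑' k : ℤ,
              ((volume (ball x ((2 : ℝ) ^ k)))⁻¹ *
                ∫⁻ y in ball x ((2 : ℝ) ^ k),
                  ENNReal.ofReal
                    (|f y - ⨍ z in ball x ((2 : ℝ) ^ k), f z| ^ ρ')) ^ (1 / ρ') := by

  haveI : Nontrivial (E⁅n⁆) := nontrivial_euclidean n hn
  have hdim : Module.finrank ℝ (E⁅n⁆) = n := finrank_euclideanSpace_fin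
  have hρ0 : 0 < ρ := lt_trans one_pos hρ
  have hρ'inv : 1 / ρ' = 1 - 1 / ρ := by linarith
  have hρ'invpos : 0 < 1 / ρ' := by
    rw [hρ'inv]
    have : 1 / ρ < 1 := by
      rw [div_lt_one hρ0]; exact hρ
    linarith
  have hρ'0 : 0 < ρ' := by
    by_contra h
    push_neg at h
    have : 1 / ρ' ≤ 0 := div_nonpos_of_nonneg_of_nonpos zero_le_one h
    linarith
  have hconj : ρ.HolderConjugate ρ' := Real.holderConjugate_iff.mpr ⟨hρ, by rw [← one_div, ← one_div]; exact hρ'⟩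
  set V : ℝ≥0∞ := volume (ball (0 : E⁅n⁆) 1) with hV
  have hV0 : V ≠ 0 := (measure_ball_pos _ _ one_pos).ne'
  have hVtop : V ≠ ⊤ := measure_ball_lt_top.ne
  set C : ℝ := ((2:ℝ≥0∞) ^ ((n:ℝ) - 1/ρ) * V ^ (1/ρ')).toReal + 1 with hC
  have hKfin : (2:ℝ≥0∞) ^ ((n:ℝ) - 1/ρ) * V ^ (1/ρ') ≠ ⊤ := by
    apply ENNReal.mul_ne_top
    · exact ENNReal.rpow_ne_top_of_nonneg (by
        have : 1/ρ < 1 := by rw [div_lt_one hρ0]; exact hρ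
        have : (2:ℝ) ≤ (n:ℝ) := by exact_mod_cast hn
        linarith) (by norm_num)
    · exact ENNReal.rpow_ne_top_of_nonneg hρ'invpos.le hVtop
  have hCle : (2:ℝ≥0∞) ^ ((n:ℝ) - 1/ρ) * V ^ (1/ρ') ≤ ENNReal.ofReal C := by
    conv_lhs => rw [← ENNReal.ofReal_toReal hKfin]
    exact ENNReal.ofReal_le_ofReal (by rw [hC]; linarith)
  have hC0 : 0 < C := add_pos_of_nonneg_of_pos ENNReal.toReal_nonneg one_pos
  refine ⟨C, hC0, ?_⟩
  intro Ω hΩm hΩh hΩint hΩ0 f hf hfc x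
  have hfcont : Continuous f := hf.continuous
  set Nρ : ℝ≥0∞ := (∫⁻ z : sphere (0 : E⁅n⁆) 1,
      ENNReal.ofReal (|Ω (z : E⁅n⁆)| ^ ρ) ∂((volume : Measure (E⁅n⁆)).toSphere)) with hNρ
  set c : ℤ → ℝ := fun k => ⨍ z in ball x ((2:ℝ)^k), f z with hc
  set J : ℤ → ℝ≥0∞ := fun k => ∫⁻ y in ball x ((2:ℝ)^k),
      ENNReal.ofReal (|f y - c k| ^ ρ') with hJ
  set I : ℤ → ℝ≥0∞ := fun k => ((volume (ball x ((2:ℝ)^k)))⁻¹ * J k) ^ (1/ρ') with hI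
  have main : ∀ t : ℝ, 0 < t →
      ENNReal.ofReal
          |∫ y in {y : E⁅n⁆ | t < ‖y‖}, (Ω y / ‖y‖ ^ n) * f (x - y)| ≤
        ENNReal.ofReal C * Nρ ^ (1/ρ) * ∑' k : ℤ, I k := by
    intro t ht
    set a : ℤ → ℝ := fun k => max t ((2:ℝ)^(k-1)) with ha
    set S : ℤ → Set (E⁅n⁆) := fun k => (fun y : E⁅n⁆ => ‖y‖) ⁻¹' Ioc (a k) ((2:ℝ)^k) with hS
    have hSm : ∀ k, MeasurableSet (S k) := fun k => measurable_norm measurableSet_Ioc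
    have hta : ∀ k, t ≤ a k := fun k => le_max_left _ _
    have h2a : ∀ k, (2:ℝ)^(k-1) ≤ a k := fun k => le_max_right _ _
    have ha0 : ∀ k, 0 < a k := fun k => lt_of_lt_of_le ht (hta k)
    have hU : (⋃ k : ℤ, S k) = {y : E⁅n⁆ | t < ‖y‖} := by
      ext y
      simp only [mem_iUnion, hS, mem_preimage, mem_Ioc, mem_setOf_eq]
      constructor
      · rintro ⟨k, h1, h2⟩
        exact lt_of_le_of_lt (hta k) h1
      · intro hy
        obtain ⟨k₁, hk₁⟩ := exists_mem_Ioc_zpow (lt_trans ht hy) one_lt_two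
        refine ⟨k₁ + 1, ?_, hk₁.2⟩
        rw [ha]
        simp only [add_sub_cancel_right]
        exact max_lt hy hk₁.1
    have hdisj : Pairwise (Function.onFun Disjoint S) := by
      intro i j hij
      rw [Function.onFun]
      rw [Set.disjoint_left]
      intro y hyi hyj
      simp only [hS, mem_preimage, mem_Ioc] at hyi hyj
      rcases lt_or_gt_of_ne hij with h | h
      · have : (2:ℝ)^i ≤ (2:ℝ)^(j-1) := zpow_le_zpow_right₀ one_le_two (by omega)
        exact absurd hyi.2 (not_le.2 (lt_of_le_of_lt (le_trans this (h2a j)) hyj.1))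
      · have : (2:ℝ)^j ≤ (2:ℝ)^(i-1) := zpow_le_zpow_right₀ one_le_two (by omega)
        exact absurd hyj.2 (not_le.2 (lt_of_le_of_lt (le_trans this (h2a i)) hyi.1))
    set g : E⁅n⁆ → ℝ := fun y => (Ω y / ‖y‖ ^ n) * f (x - y) with hg
    have hgm : Measurable g := by
      apply Measurable.mul
      · exact hΩm.div (measurable_norm.pow_const n)
      · exact (hfcont.measurable).comp (measurable_const.sub measurable_id)
    obtain ⟨R₀, hR₀⟩ : ∃ R₀, tsupport f ⊆ closedBall 0 R₀ :=
      (hfc.isBounded).subset_closedBall 0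
    obtain ⟨M, hM⟩ : ∃ M, ∀ z : E⁅n⁆, |f z| ≤ M := by
      obtain ⟨M, hM⟩ := hfcont.bounded_above_of_compact_support hfc
      exact ⟨M, hM⟩
    have hM0 : 0 ≤ M := le_trans (abs_nonneg _) (hM 0)
    have htn : (0:ℝ) < t^n := pow_pos ht n
    have hgi : IntegrableOn g {y : E⁅n⁆ | t < ‖y‖} volume := by
      set b₀ : ℝ := t + ‖x‖ + max R₀ 0 + 1 with hb₀
      set ψ₀ : ℝ → ℝ := (Ioc t b₀).indicator (fun _ => M / t^n) with hψ₀
      have hmaj : Integrable (fun y => Ω y * ψ₀ ‖y‖) volume := by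
        refine polar_integrable n hn Ω hΩm hΩh hΩint ψ₀
          (measurable_const.indicator measurableSet_Ioc) t b₀ (M / t^n) ht
          (fun r hr => by
            by_contra h
            exact hr (indicator_of_notMem h _)) (fun r => ?_)
        rw [hψ₀]
        by_cases h : r ∈ Ioc t b₀
        · rw [indicator_of_mem h]
          exact le_of_eq (abs_of_nonneg (div_nonneg hM0 htn.le))
        · rw [indicator_of_notMem h]
          simpa using div_nonneg hM0 htn.le
      refine Integrable.mono hmaj.restrict hgm.aestronglyMeasurable.restrict ?_
      have hms : MeasurableSet {y : E⁅n⁆ | t < ‖y‖} :=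
        measurableSet_lt measurable_const measurable_norm
      filter_upwards [ae_restrict_mem hms] with y hy
      have hty : t < ‖y‖ := hy
      by_cases hyb : ‖y‖ ≤ b₀
      · have hval : ψ₀ ‖y‖ = M / t^n := indicator_of_mem (mem_Ioc.mpr ⟨hty, hyb⟩) _
        rw [Real.norm_eq_abs, Real.norm_eq_abs, hg, hval, abs_mul, abs_mul, abs_div,
          abs_of_nonneg (div_nonneg hM0 htn.le)]
        have h1 : |Ω y| / |‖y‖ ^ n| * |f (x - y)| ≤ |Ω y| / t^n * M := by
          rw [abs_of_pos (pow_pos (lt_trans ht hty) n)]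
          refine mul_le_mul ?_ (hM _) (abs_nonneg _) (div_nonneg (abs_nonneg _) htn.le)
          exact div_le_div_of_nonneg_left (abs_nonneg _) htn
            (pow_le_pow_left₀ ht.le hty.le n)
        calc |Ω y| / |‖y‖ ^ n| * |f (x - y)| ≤ |Ω y| / t^n * M := h1
          _ = |Ω y| * (M / t^n) := by ring
      · have hz : f (x - y) = 0 := by
          apply image_eq_zero_of_notMem_tsupport
          intro hmem
          have h1 : ‖x - y‖ ≤ R₀ := mem_closedBall_zero_iff.mp (hR₀ hmem)
          have h2 : ‖y‖ - ‖x‖ ≤ ‖x - y‖ := by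
            have h := norm_sub_norm_le y x
            rw [norm_sub_rev y x] at h
            linarith
          have h3 : b₀ < ‖y‖ := not_le.1 hyb
          have h4 : R₀ ≤ max R₀ 0 := le_max_left _ _
          have hx0 : (0:ℝ) ≤ ‖x‖ := norm_nonneg _
          have h5 : b₀ = t + ‖x‖ + max R₀ 0 + 1 := hb₀
          linarith
        rw [hg]
        simp only [hz, mul_zero, norm_zero]
        exact norm_nonneg _
    have hgiU : IntegrableOn g (⋃ k, S k) volume := hU ▸ hgi
    have hsum : HasSum (fun k => ∫ y in S k, g y) (∫ y in ⋃ k, S k, g y) :=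
      hasSum_integral_iUnion hSm hdisj hgiU
    have habs : HasSum (fun k => ∫ y in S k, |g y|) (∫ y in ⋃ k, S k, |g y|) :=
      hasSum_integral_iUnion hSm hdisj hgiU.abs
    have hsummable : Summable fun k => ‖∫ y in S k, g y‖ := by
      refine Summable.of_nonneg_of_le (fun k => norm_nonneg _) (fun k => ?_) habs.summable
      calc ‖∫ y in S k, g y‖ ≤ ∫ y in S k, ‖g y‖ := norm_integral_le_integral_norm _
        _ = ∫ y in S k, |g y| := by simp only [Real.norm_eq_abs]
    have key : ∀ k : ℤ, ENNReal.ofReal ‖∫ y in S k, g y‖ ≤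
        ENNReal.ofReal C * Nρ ^ (1/ρ) * I k := by
      intro k
      have h2k : (0:ℝ) < (2:ℝ)^k := zpow_pos two_pos k
      have h2k1 : (0:ℝ) < (2:ℝ)^(k-1) := zpow_pos two_pos _
      have hank : (0:ℝ) < (a k)^n := pow_pos (ha0 k) n
      set ψ₁ : ℝ → ℝ := (Ioc (a k) ((2:ℝ)^k)).indicator (fun r => (r^n)⁻¹) with hψ₁
      have hψ₁m : Measurable ψ₁ :=
        ((measurable_id.pow_const n).inv).indicator measurableSet_Ioc
      have hψ₁int : Integrable (fun y => Ω y * ψ₁ ‖y‖) volume := by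
        refine polar_integrable n hn Ω hΩm hΩh hΩint ψ₁ hψ₁m (a k) ((2:ℝ)^k)
          (((a k)^n)⁻¹) (ha0 k)
          (fun r hr => by
            by_contra h
            exact hr (indicator_of_notMem h _)) (fun r => ?_)
        by_cases h : r ∈ Ioc (a k) ((2:ℝ)^k)
        · rw [hψ₁, indicator_of_mem h,
            abs_of_nonneg (inv_nonneg.2 (pow_nonneg (le_trans (ha0 k).le h.1.le) n))]
          exact inv_anti₀ hank (pow_le_pow_left₀ (ha0 k).le h.1.le n)
        · rw [hψ₁, indicator_of_notMem h]
          simpa using inv_nonneg.2 hank.le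
      have hWeq : EqOn (fun y => Ω y * ψ₁ ‖y‖) (fun y : E⁅n⁆ => Ω y / ‖y‖ ^ n) (S k) := by
        intro y hy
        have hy' : ‖y‖ ∈ Ioc (a k) ((2:ℝ)^k) := hy
        show Ω y * ψ₁ ‖y‖ = Ω y / ‖y‖ ^ n
        rw [hψ₁, indicator_of_mem hy', div_eq_mul_inv]
      have hWint : IntegrableOn (fun y : E⁅n⁆ => Ω y / ‖y‖ ^ n) (S k) volume :=
        (hψ₁int.integrableOn).congr_fun hWeq (hSm k)
      have hW0 : (∫ y in S k, Ω y / ‖y‖ ^ n ∂(volume : Measure (E⁅n⁆))) = 0 := by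
        rw [← setIntegral_congr_fun (hSm k) hWeq]
        rw [setIntegral_eq_integral_of_forall_compl_eq_zero (fun y hy => ?_)]
        · exact polar_integral_zero n hn Ω hΩm hΩh hΩ0 ψ₁ hψ₁m
        · have hy' : ‖y‖ ∉ Ioc (a k) ((2:ℝ)^k) := hy
          rw [hψ₁, indicator_of_notMem hy', mul_zero]
      have hsub : ∫ y in S k, g y = ∫ y in S k, (Ω y / ‖y‖ ^ n) * (f (x - y) - c k) := by
        have e1 : ∀ y : E⁅n⁆, (Ω y / ‖y‖ ^ n) * (f (x - y) - c k)
            = g y - (Ω y / ‖y‖ ^ n) * c k := fun y => by rw [hg]; ring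
        simp_rw [e1]
        rw [integral_sub (hgi.mono_set ?_) (hWint.mul_const (c k)),
          integral_mul_const, hW0, zero_mul, sub_zero]
        intro y hy
        have hy' : ‖y‖ ∈ Ioc (a k) ((2:ℝ)^k) := hy
        exact lt_of_le_of_lt (hta k) hy'.1
      have h4 : ENNReal.ofReal ‖∫ y in S k, g y‖ ≤
          ∫⁻ y in S k, ENNReal.ofReal ‖(Ω y / ‖y‖ ^ n) * (f (x - y) - c k)‖ := by
        rw [hsub]
        exact le_trans (ENNReal.ofReal_le_ofReal (norm_integral_le_lintegral_norm _))
          ENNReal.ofReal_toReal_le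
      set F : E⁅n⁆ → ℝ≥0∞ :=
        fun y => ENNReal.ofReal |Ω y| * (ENNReal.ofReal (‖y‖^n))⁻¹ with hF
      set G : E⁅n⁆ → ℝ≥0∞ := fun y => ENNReal.ofReal |f (x - y) - c k| with hG
      have h5 : (∫⁻ y in S k, ENNReal.ofReal ‖(Ω y / ‖y‖ ^ n) * (f (x - y) - c k)‖)
          = ∫⁻ y in S k, (F * G) y := by
        refine setLIntegral_congr_fun (hSm k) (fun y hy => ?_)
        have hy' : ‖y‖ ∈ Ioc (a k) ((2:ℝ)^k) := hy
        have hy0 : (0:ℝ) < ‖y‖ := lt_trans (ha0 k) hy'.1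
        have hyn : (0:ℝ) < ‖y‖ ^ n := pow_pos hy0 n
        rw [Pi.mul_apply, hF, hG, Real.norm_eq_abs, abs_mul, abs_div, abs_of_pos hyn,
          ENNReal.ofReal_mul (div_nonneg (abs_nonneg _) hyn.le),
          ENNReal.ofReal_div_of_pos hyn, div_eq_mul_inv]
      have hFm : Measurable F :=
        (hΩm.abs.ennreal_ofReal).mul ((measurable_norm.pow_const n).ennreal_ofReal.inv)
      have hGm : Measurable G :=
        (((hfcont.measurable.comp (measurable_const.sub measurable_id)).sub_const
          (c k)).abs).ennreal_ofReal
      have h6 : (∫⁻ y in S k, (F * G) y) ≤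
          (∫⁻ y in S k, F y ^ ρ) ^ (1/ρ) * (∫⁻ y in S k, G y ^ ρ') ^ (1/ρ') :=
        ENNReal.lintegral_mul_le_Lp_mul_Lq _ hconj hFm.aemeasurable hGm.aemeasurable
      -- factor 1
      set D : ℝ≥0∞ := ENNReal.ofReal (((2:ℝ)^k)^(n-1)) *
        ((ENNReal.ofReal (((2:ℝ)^(k-1))^n))⁻¹) ^ ρ * ENNReal.ofReal ((2:ℝ)^(k-1)) with hD
      set φ₂ : ℝ → ℝ≥0∞ :=
        (Ioc (a k) ((2:ℝ)^k)).indicator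
          (fun s => ((ENNReal.ofReal (s^n))⁻¹) ^ ρ) with hφ₂
      have hφ₂m : Measurable φ₂ :=
        (((measurable_id.pow_const n).ennreal_ofReal.inv).pow_const ρ).indicator
          measurableSet_Ioc
      have h71 : (∫⁻ y in S k, F y ^ ρ) =
          ∫⁻ y, (fun y : E⁅n⁆ => ENNReal.ofReal |Ω y| ^ ρ) y * φ₂ ‖y‖ := by
        rw [← lintegral_indicator (hSm k)]
        refine lintegral_congr fun y => ?_
        by_cases hy : y ∈ S k
        · have hy' : ‖y‖ ∈ Ioc (a k) ((2:ℝ)^k) := hy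
          rw [indicator_of_mem hy, hφ₂, indicator_of_mem hy', hF,
            ENNReal.mul_rpow_of_nonneg _ _ hρ0.le]
        · have hy' : ‖y‖ ∉ Ioc (a k) ((2:ℝ)^k) := hy
          rw [indicator_of_notMem hy, hφ₂, indicator_of_notMem hy', mul_zero]
      have h72 : (∫⁻ y, (fun y : E⁅n⁆ => ENNReal.ofReal |Ω y| ^ ρ) y * φ₂ ‖y‖) =
          Nρ * ∫⁻ r in Ioi (0:ℝ), ENNReal.ofReal (r^(n-1)) * φ₂ r := by
        rw [polar_lintegral n hn _ ((hΩm.abs.ennreal_ofReal).pow_const ρ)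
          (fun cc hcc y => by rw [hΩh cc hcc y]) φ₂ hφ₂m]
        congr 1
        rw [hNρ]
        refine lintegral_congr fun z => ?_
        rw [ENNReal.ofReal_rpow_of_nonneg (abs_nonneg _) hρ0.le]
      have h73 : (∫⁻ r in Ioi (0:ℝ), ENNReal.ofReal (r^(n-1)) * φ₂ r) ≤ D := by
        have hsub2 : Ioc (a k) ((2:ℝ)^k) ⊆ Ioi (0:ℝ) := fun r hr => lt_trans (ha0 k) hr.1
        have hstep : (∫⁻ r in Ioi (0:ℝ), ENNReal.ofReal (r^(n-1)) * φ₂ r) =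
            ∫⁻ r in Ioc (a k) ((2:ℝ)^k),
              ENNReal.ofReal (r^(n-1)) * ((ENNReal.ofReal (r^n))⁻¹) ^ ρ := by
          have : (fun r => ENNReal.ofReal (r^(n-1)) * φ₂ r) =
              fun r => (Ioc (a k) ((2:ℝ)^k)).indicator
                (fun s => ENNReal.ofReal (s^(n-1)) * ((ENNReal.ofReal (s^n))⁻¹) ^ ρ) r := by
            funext r
            rw [hφ₂]
            by_cases h : r ∈ Ioc (a k) ((2:ℝ)^k)
            · rw [indicator_of_mem h, indicator_of_mem h]
            · rw [indicator_of_notMem h, indicator_of_notMem h, mul_zero]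
          rw [this, lintegral_indicator measurableSet_Ioc,
            Measure.restrict_restrict measurableSet_Ioc, inter_eq_left.mpr hsub2]
        rw [hstep]
        calc ∫⁻ r in Ioc (a k) ((2:ℝ)^k),
              ENNReal.ofReal (r^(n-1)) * ((ENNReal.ofReal (r^n))⁻¹) ^ ρ
            ≤ ∫⁻ _ in Ioc (a k) ((2:ℝ)^k),
              ENNReal.ofReal (((2:ℝ)^k)^(n-1)) *
                ((ENNReal.ofReal (((2:ℝ)^(k-1))^n))⁻¹) ^ ρ := by
              refine setLIntegral_mono measurable_const (fun r hr => ?_)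
              refine mul_le_mul' (ENNReal.ofReal_le_ofReal
                (pow_le_pow_left₀ (le_trans (ha0 k).le hr.1.le) hr.2 _)) ?_
              refine ENNReal.rpow_le_rpow ?_ hρ0.le
              refine ENNReal.inv_le_inv.mpr (ENNReal.ofReal_le_ofReal ?_)
              exact pow_le_pow_left₀ h2k1.le (le_trans (h2a k) hr.1.le) n
          _ = (ENNReal.ofReal (((2:ℝ)^k)^(n-1)) *
                ((ENNReal.ofReal (((2:ℝ)^(k-1))^n))⁻¹) ^ ρ) *
                volume (Ioc (a k) ((2:ℝ)^k)) := setLIntegral_const _ _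
          _ ≤ D := by
              rw [hD, mul_assoc, mul_assoc]
              refine mul_le_mul_right (mul_le_mul_right ?_ _) _
              rw [Real.volume_Ioc]
              apply ENNReal.ofReal_le_ofReal
              have h2e : (2:ℝ)^k = 2 * (2:ℝ)^(k-1) := by
                rw [mul_comm, ← zpow_add_one₀ (show (2:ℝ) ≠ 0 by norm_num) (k-1)]
                congr 1
                ring
              have := h2a k
              linarith
      have h7 : (∫⁻ y in S k, F y ^ ρ) ≤ Nρ * D := by
        rw [h71, h72]
        exact mul_le_mul_right h73 _
      -- factor 2
      have h8 : (∫⁻ y in S k, G y ^ ρ') ≤ J k := by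
        set u : E⁅n⁆ → ℝ≥0∞ := fun z => ENNReal.ofReal (|f z - c k| ^ ρ') with hu
        have hGrw : ∀ y : E⁅n⁆, G y ^ ρ' = u (x - y) := fun y => by
          rw [hG, hu, ENNReal.ofReal_rpow_of_nonneg (abs_nonneg _) hρ'0.le]
        have hsub3 : S k ⊆ closedBall (0:E⁅n⁆) ((2:ℝ)^k) := by
          intro y hy
          have hy' : ‖y‖ ∈ Ioc (a k) ((2:ℝ)^k) := hy
          exact mem_closedBall_zero_iff.mpr hy'.2
        calc (∫⁻ y in S k, G y ^ ρ')
            = ∫⁻ y in S k, u (x - y) := by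
              exact lintegral_congr fun y => hGrw y
          _ ≤ ∫⁻ y in closedBall (0:E⁅n⁆) ((2:ℝ)^k), u (x - y) :=
              lintegral_mono_set hsub3
          _ = ∫⁻ z in closedBall x ((2:ℝ)^k), u z := by
              have hpre : (fun y : E⁅n⁆ => x - y) ⁻¹' (closedBall x ((2:ℝ)^k)) =
                  closedBall (0:E⁅n⁆) ((2:ℝ)^k) := by
                ext y
                simp only [mem_preimage, mem_closedBall, dist_eq_norm, sub_sub_cancel_left,
                  norm_neg, sub_zero]
              rw [← hpre]
              exact (measurePreserving_sub_left volume x).setLIntegral_comp_preimage_emb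
                (MeasurableEquiv.subLeft x).measurableEmbedding u _
          _ = ∫⁻ z in ball x ((2:ℝ)^k), u z := by
              refine setLIntegral_congr ?_
              rw [ae_eq_set]
              constructor
              · rw [closedBall_diff_ball]
                exact Measure.addHaar_sphere volume x _
              · rw [diff_eq_empty.2 ball_subset_closedBall]
                exact measure_empty
          _ = J k := by rw [hJ]
      -- combine exponent arithmetic
      set B : ℝ≥0∞ := volume (ball x ((2:ℝ)^k)) with hB
      have hBval : B = ENNReal.ofReal (((2:ℝ)^k)^n) * V := by
        rw [hB, hV, Measure.addHaar_ball volume x h2k.le, hdim]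
      have hB0 : B ≠ 0 := (measure_ball_pos _ _ h2k).ne'
      have hBtop : B ≠ ⊤ := measure_ball_lt_top.ne
      have h2ne0 : (2:ℝ≥0∞) ≠ 0 := by norm_num
      have h2netop : (2:ℝ≥0∞) ≠ ⊤ := by norm_num
      have hcast : ((n:ℝ) - 1) = ((n - 1 : ℕ) : ℝ) := by
        have : (1:ℕ) ≤ n := by omega
        push_cast [Nat.cast_sub this]
        ring
      have hDval : D = (2:ℝ≥0∞) ^ ((k:ℝ) * ((n:ℝ) - 1) + (-(((k:ℝ) - 1) * n) * ρ) + ((k:ℝ) - 1)) := by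
        rw [hD, ofReal_two_zpow_pow, ofReal_two_zpow_pow, ofReal_two_zpow]
        rw [← ENNReal.rpow_neg, ← ENNReal.rpow_mul]
        rw [← ENNReal.rpow_add _ _ h2ne0 h2netop, ← ENNReal.rpow_add _ _ h2ne0 h2netop]
        congr 1
        push_cast [Nat.cast_sub (show (1:ℕ) ≤ n by omega)]
        ring
      have hBval2 : B ^ (1/ρ') = (2:ℝ≥0∞) ^ ((k:ℝ) * n * (1/ρ')) * V ^ (1/ρ') := by
        rw [hBval, ENNReal.mul_rpow_of_nonneg _ _ hρ'invpos.le, ofReal_two_zpow_pow,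
          ← ENNReal.rpow_mul]
      have hkey2 : D ^ (1/ρ) * B ^ (1/ρ') ≤ ENNReal.ofReal C := by
        rw [hDval, hBval2, ← ENNReal.rpow_mul, ← mul_assoc,
          ← ENNReal.rpow_add _ _ h2ne0 h2netop]
        have hexp : ((k:ℝ) * ((n:ℝ) - 1) + (-(((k:ℝ) - 1) * n) * ρ) + ((k:ℝ) - 1)) * (1/ρ)
            + (k:ℝ) * n * (1/ρ') = (n:ℝ) - 1/ρ := by
          rw [hρ'inv]
          field_simp
          ring
        rw [hexp]
        exact hCle
      have hBr0 : B ^ (1/ρ') ≠ 0 := by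
        simp [ENNReal.rpow_eq_zero_iff, hB0, hBtop, hρ'invpos, hρ'invpos.ne']
      have hBrtop : B ^ (1/ρ') ≠ ⊤ := by
        simp [ENNReal.rpow_eq_top_iff, hB0, hBtop, hρ'invpos, hρ'invpos.ne']
      have hD3 : D ^ (1/ρ) ≤ ENNReal.ofReal C * (B⁻¹) ^ (1/ρ') := by
        rw [ENNReal.inv_rpow]
        have : D ^ (1/ρ) = D ^ (1/ρ) * B ^ (1/ρ') * (B ^ (1/ρ'))⁻¹ := by
          rw [mul_assoc, ENNReal.mul_inv_cancel hBr0 hBrtop, mul_one]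
        rw [this]
        exact mul_le_mul_left hkey2 _
      have hIk : I k = (B⁻¹) ^ (1/ρ') * (J k) ^ (1/ρ') := by
        simp only [hI, hB]
        rw [ENNReal.mul_rpow_of_nonneg _ _ hρ'invpos.le]
      calc ENNReal.ofReal ‖∫ y in S k, g y‖
          ≤ ∫⁻ y in S k, (F * G) y := le_trans h4 (le_of_eq h5)
        _ ≤ (∫⁻ y in S k, F y ^ ρ) ^ (1/ρ) * (∫⁻ y in S k, G y ^ ρ') ^ (1/ρ') := h6
        _ ≤ (Nρ * D) ^ (1/ρ) * (J k) ^ (1/ρ') := by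
            exact mul_le_mul' (ENNReal.rpow_le_rpow h7 (by positivity))
              (ENNReal.rpow_le_rpow h8 hρ'invpos.le)
        _ = Nρ ^ (1/ρ) * (D ^ (1/ρ) * (J k) ^ (1/ρ')) := by
            rw [ENNReal.mul_rpow_of_nonneg _ _ (by positivity : (0:ℝ) ≤ 1/ρ), mul_assoc]
        _ ≤ Nρ ^ (1/ρ) * ((ENNReal.ofReal C * (B⁻¹) ^ (1/ρ')) * (J k) ^ (1/ρ')) := by
            exact mul_le_mul_right (mul_le_mul_left hD3 _) _
        _ = ENNReal.ofReal C * Nρ ^ (1/ρ) * I k := by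
            rw [hIk]
            ring
    calc ENNReal.ofReal |∫ y in {y : E⁅n⁆ | t < ‖y‖}, g y|
        = ENNReal.ofReal ‖∑' k, ∫ y in S k, g y‖ := by
          rw [hsum.tsum_eq, hU, Real.norm_eq_abs]
      _ ≤ ENNReal.ofReal (∑' k, ‖∫ y in S k, g y‖) :=
          ENNReal.ofReal_le_ofReal (norm_tsum_le_tsum_norm hsummable)
      _ = ∑' k, ENNReal.ofReal ‖∫ y in S k, g y‖ :=
          ENNReal.ofReal_tsum_of_nonneg (fun _ => norm_nonneg _) hsummable
      _ ≤ ∑' k, (ENNReal.ofReal C * Nρ ^ (1/ρ) * I k) := ENNReal.tsum_le_tsum key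
      _ = ENNReal.ofReal C * Nρ ^ (1/ρ) * ∑' k, I k := ENNReal.tsum_mul_left
  exact ⟨main, iSup_le fun t => iSup_le fun ht => main t ht⟩
end
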